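/- arXiv:1609.01488 — 2 statements merged into one kernel-verified Lean document; each statement's English description precedes it below -/
import Mathlib

section
/- On the state space ℕ^d with the componentwise partial order, suppose h : ℕ^d → [0,∞) and f : ℕ^d → ℕ^d are such that for all x ≤ z either (a) h(x) = h(z) and f(x) ≤ f(z), or (b) h(x) = 0 and x ≤ f(z). Then for any λ ≥ sup h, the operator Q φ := φ + (1/λ)·h·(φ∘f − φ) maps nonnegative bounded nondecreasing functions to nondecreasing functions, i.e., x ≤ z implies (Qφ)(x) ≤ (Qφ)(z) for every bounded nondecreasing φ : ℕ^d → ℝ. -/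
/-- One-transition building block of strong stochastic monotonicity on ℕ^d:
if for all x ≤ z either h(x) = h(z) and f(x) ≤ f(z), or h(x) = 0 and x ≤ f(z),
then for λ ≥ sup h the operator Qφ = φ + (1/λ)·h·(φ∘f − φ) maps nonnegative
bounded nondecreasing functions to nondecreasing functions. -/
theorem stmt_9 (d : ℕ) (h : (Fin d → ℕ) → ℝ) (f : (Fin d → ℕ) → (Fin d → ℕ))
    (hnn : ∀ x, 0 ≤ h x)
    (hcond : ∀ x z : Fin d → ℕ, x ≤ z →
      (h x = h z ∧ f x ≤ f z) ∨ (h x = 0 ∧ x ≤ f z))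
    (lam : ℝ) (hlam : 0 < lam) (hsup : ∀ x, h x ≤ lam)
    (φ : (Fin d → ℕ) → ℝ) (hφ : Monotone φ) (hφ0 : ∀ x, 0 ≤ φ x)
    (hφbd : ∃ C : ℝ, ∀ x, φ x ≤ C) :
    Monotone (fun x => φ x + (1 / lam) * (h x * (φ (f x) - φ x))) := by
  intro x z hxz
  simp only
  have hlam' : lam ≠ 0 := ne_of_gt hlam
  rcases hcond x z hxz with ⟨he, hf⟩ | ⟨h0, hxf⟩
  · have key : φ (f x) - φ x ≤ φ (f z) - φ z + (φ z - φ x) := by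
      have := hφ hf
      linarith
    have hzx : φ x ≤ φ z := hφ hxz
    rw [he]
    have hδ : h z / lam ≤ 1 := by
      rw [div_le_one hlam]; exact hsup z
    have hδ0 : 0 ≤ h z / lam := div_nonneg (hnn z) hlam.le
    have : h z * (φ (f x) - φ x) ≤ h z * (φ (f z) - φ z) + h z * (φ z - φ x) :=
      by nlinarith [mul_le_mul_of_nonneg_left key (hnn z)]
    have h2 : (1/lam) * (h z * (φ z - φ x)) ≤ φ z - φ x := by
      have : (h z / lam) * (φ z - φ x) ≤ 1 * (φ z - φ x) :=
        mul_le_mul_of_nonneg_right hδ (by linarith)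
      rw [one_mul] at this
      calc (1/lam) * (h z * (φ z - φ x)) = (h z / lam) * (φ z - φ x) := by ring
        _ ≤ φ z - φ x := this
    have h1 : (1/lam) * (h z * (φ (f x) - φ x)) ≤
        (1/lam) * (h z * (φ (f z) - φ z)) + (1/lam) * (h z * (φ z - φ x)) := by
      have hl : 0 ≤ 1/lam := by positivity
      nlinarith
    linarith
  · rw [h0]
    have hδ : h z / lam ≤ 1 := by rw [div_le_one hlam]; exact hsup z
    have hδ0 : 0 ≤ h z / lam := div_nonneg (hnn z) hlam.le
    have hzx : φ x ≤ φ z := hφ hxz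
    have hxfz : φ x ≤ φ (f z) := hφ hxf
    have : (h z / lam) * (φ (f z) - φ z) + (φ z - φ x) ≥ 0 := by
      nlinarith
    have : (1/lam) * (h z * (φ (f z) - φ z)) = (h z / lam) * (φ (f z) - φ z) := by ring
    nlinarith
end

section
/- Under the hypotheses of F-monotonicity, the semigroup is monotone in the arrival rates: if 0 ≤ θ ≤ ϑ componentwise, φ ∈ F, and for each k the operator (Φ[f_{(0,k)}] − I) composed with exp(sA_ϑ) sends φ to a nonnegative function for all s ≥ 0, then (exp(tA_ϑ)φ)(ξ) ≥ (exp(tA_θ)φ)(ξ) for all ξ and all t ≥ 0, where A_ϑ − A_θ = Σ_k (ϑ_k − θ_k)(Φ[f_{(0,k)}] − I) and each exp((t−s)A_θ) is a positive operator (maps nonnegative functions to nonnegative functions). -/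
open scoped BoundedContinuousFunction

/-- The exponential of a bounded operator, `exp A = Σₙ Aⁿ/n!`. -/
noncomputable def expOp {E : Type*} [NormedAddCommGroup E] [NormedSpace ℝ E]
    (A : E →L[ℝ] E) : E →L[ℝ] E :=
  ∑' n : ℕ, ((n.factorial : ℝ)⁻¹) • A ^ n


open NormedSpace in
lemma expOp_eq {E : Type*} [NormedAddCommGroup E] [NormedSpace ℝ E]
    (A : E →L[ℝ] E) : expOp A = NormedSpace.exp A := by
  rw [exp_eq_tsum ℝ]; rfl

/-- Helper providing the `TopologicalRing` instance on operators, which direct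
instance search fails to find for `X →ᵇ ℝ`. -/
def trAux (E : Type*) [NormedAddCommGroup E] [NormedSpace ℝ E] :
    IsTopologicalRing (E →L[ℝ] E) := inferInstance

/-- Helper providing the `T2Space` instance on operators. -/
def t2Aux (E : Type*) [NormedAddCommGroup E] [NormedSpace ℝ E] :
    T2Space (E →L[ℝ] E) := inferInstance

open NormedSpace in
set_option maxHeartbeats 1000000 in
set_option synthInstance.maxHeartbeats 400000 in
/-- Monotonicity of the semigroup in the arrival rates: if 0 ≤ θ ≤ ϑ,
A_ϑ − A_θ = Σₖ (ϑₖ − θₖ)(Φ[f_{(0,k)}] − I), each (Φ[f_{(0,k)}] − I)exp(sA_ϑ)φ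
is nonnegative for s ≥ 0, and each exp((t−s)A_θ) is a positive operator, then
(exp(tA_ϑ)φ)(ξ) ≥ (exp(tA_θ)φ)(ξ) for all ξ and t ≥ 0. -/
theorem stmt_12 (X : Type*) [Countable X] [PartialOrder X]
    [TopologicalSpace X] [DiscreteTopology X]
    (d : ℕ) (θ ϑ : Fin d → ℝ) (hθ : 0 ≤ θ) (hθϑ : θ ≤ ϑ)
    (f : Fin d → X → X) (hf : ∀ k (ξ : X), ξ ≤ f k ξ)
    (Aθ Aϑ : (X →ᵇ ℝ) →L[ℝ] (X →ᵇ ℝ))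
    (B : Fin d → ((X →ᵇ ℝ) →L[ℝ] (X →ᵇ ℝ)))
    (hB : ∀ k (ψ : X →ᵇ ℝ) (x : X), B k ψ x = ψ (f k x) - ψ x)
    (hdiff : Aϑ - Aθ = ∑ k : Fin d, (ϑ k - θ k) • B k)
    (φ : X →ᵇ ℝ)
    (hpos : ∀ k : Fin d, ∀ s : ℝ, 0 ≤ s → ∀ x : X,
      0 ≤ (B k) (expOp (s • Aϑ) φ) x)
    (hposop : ∀ s : ℝ, 0 ≤ s → ∀ ψ : X →ᵇ ℝ, (∀ x, 0 ≤ ψ x) →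
      ∀ x : X, 0 ≤ expOp (s • Aθ) ψ x) :
    ∀ t : ℝ, 0 ≤ t → ∀ ξ : X,
      expOp (t • Aθ) φ ξ ≤ expOp (t • Aϑ) φ ξ := by
  letI := trAux (X →ᵇ ℝ)
  letI := t2Aux (X →ᵇ ℝ)
  intro t ht ξ
  classical
  set E1 : ℝ → ((X →ᵇ ℝ) →L[ℝ] (X →ᵇ ℝ)) := fun s => exp ((t - s) • Aθ) with hE1
  set E2 : ℝ → ((X →ᵇ ℝ) →L[ℝ] (X →ᵇ ℝ)) := fun s => exp (s • Aϑ) with hE2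
  set h : ℝ → ℝ := fun s => ((E1 s * E2 s) φ) ξ with hh
  have key : ∀ s : ℝ, HasDerivAt h ((E1 s) ((Aϑ - Aθ) ((E2 s) φ)) ξ) s := by
    intro s
    have hu : HasDerivAt (fun s : ℝ => t - s) (-1) s := by
      simpa using (hasDerivAt_id s).const_sub t
    have h1 : HasDerivAt E1 (-(E1 s * Aθ)) s := by
      have he : HasDerivAt (fun u : ℝ => exp (u • Aθ)) (exp ((t - s) • Aθ) * Aθ) (t - s) :=
        hasDerivAt_exp_smul_const (𝕂 := ℝ) Aθ (t - s)
      have := HasDerivAt.scomp (F := ((X →ᵇ ℝ) →L[ℝ] (X →ᵇ ℝ))) (𝕜' := ℝ) s he hu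
      simpa [hE1, Function.comp_def] using this
    have h2 : HasDerivAt E2 (Aϑ * E2 s) s := hasDerivAt_exp_smul_const' (𝕂 := ℝ) Aϑ s
    have hF : HasDerivAt (fun s => E1 s * E2 s)
        (-(E1 s * Aθ) * E2 s + E1 s * (Aϑ * E2 s)) s :=
      HasDerivAt.mul (𝕜 := ℝ) (𝔸 := ((X →ᵇ ℝ) →L[ℝ] (X →ᵇ ℝ))) h1 h2
    have hFφ : HasDerivAt (fun s => (E1 s * E2 s) φ)
        ((-(E1 s * Aθ) * E2 s + E1 s * (Aϑ * E2 s)) φ) s := by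
      simpa using hF.clm_apply (hasDerivAt_const s φ)
    have hL : HasDerivAt (fun s => (BoundedContinuousFunction.evalCLM ℝ ξ) ((E1 s * E2 s) φ))
        ((BoundedContinuousFunction.evalCLM ℝ ξ) ((-(E1 s * Aθ) * E2 s + E1 s * (Aϑ * E2 s)) φ)) s := by
      simpa using (hasDerivAt_const s (BoundedContinuousFunction.evalCLM (𝕜 := ℝ) (β := ℝ) ξ)).clm_apply hFφ
    have hval : (BoundedContinuousFunction.evalCLM ℝ ξ)
          ((-(E1 s * Aθ) * E2 s + E1 s * (Aϑ * E2 s)) φ)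
        = (E1 s) ((Aϑ - Aθ) ((E2 s) φ)) ξ := by
      simp only [BoundedContinuousFunction.evalCLM_apply, ContinuousLinearMap.add_apply,
        ContinuousLinearMap.neg_apply, ContinuousLinearMap.mul_apply,
        ContinuousLinearMap.sub_apply, map_sub, BoundedContinuousFunction.add_apply,
        BoundedContinuousFunction.neg_apply, BoundedContinuousFunction.sub_apply]
      ring
    rw [hval] at hL
    simpa [hh, ContinuousLinearMap.mul_apply] using hL
  have deriv_nonneg : ∀ s : ℝ, 0 ≤ s → s ≤ t →
      0 ≤ (E1 s) ((Aϑ - Aθ) ((E2 s) φ)) ξ := by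
    intro s hs hst
    have hψ : ∀ x : X, 0 ≤ ((Aϑ - Aθ) ((E2 s) φ)) x := by
      intro x
      rw [hdiff]
      have hsum : ((∑ k : Fin d, (ϑ k - θ k) • B k) ((E2 s) φ)) x
          = ∑ k : Fin d, (ϑ k - θ k) * ((B k) ((E2 s) φ) x) := by
        simp [ContinuousLinearMap.sum_apply]
      rw [hsum]
      refine Finset.sum_nonneg fun k _ => mul_nonneg (sub_nonneg.2 (hθϑ k)) ?_
      have := hpos k s hs x
      rwa [expOp_eq] at this
    have := hposop (t - s) (sub_nonneg.2 hst) ((Aϑ - Aθ) ((E2 s) φ)) hψ ξ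
    rwa [expOp_eq] at this
  have hmono : MonotoneOn h (Set.Icc 0 t) := by
    apply monotoneOn_of_deriv_nonneg (convex_Icc 0 t)
    · exact (continuous_iff_continuousAt.2 fun s => (key s).continuousAt).continuousOn
    · exact fun s _ => (key s).differentiableAt.differentiableWithinAt
    · intro s hs
      rw [interior_Icc] at hs
      rw [(key s).deriv]
      exact deriv_nonneg s hs.1.le hs.2.le
  have h0t : h 0 ≤ h t := hmono ⟨le_refl 0, ht⟩ ⟨ht, le_refl t⟩ ht
  have hz1 : ((0 : ℝ) • Aϑ) = 0 := zero_smul ℝ (A := ((X →ᵇ ℝ) →L[ℝ] (X →ᵇ ℝ))) Aϑ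
  have hz2 : ((0 : ℝ) • Aθ) = 0 := zero_smul ℝ (A := ((X →ᵇ ℝ) →L[ℝ] (X →ᵇ ℝ))) Aθ
  have hexpz : exp (0 : ((X →ᵇ ℝ) →L[ℝ] (X →ᵇ ℝ))) = 1 := exp_zero
  have e0 : h 0 = expOp (t • Aθ) φ ξ := by
    simp only [hh, hE1, hE2, expOp_eq, ContinuousLinearMap.mul_apply, sub_zero, hz1, hexpz,
      ContinuousLinearMap.one_apply]
  have et : h t = expOp (t • Aϑ) φ ξ := by
    simp only [hh, hE1, hE2, expOp_eq, ContinuousLinearMap.mul_apply, sub_self, hz2, hexpz,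
      ContinuousLinearMap.one_apply]
  rw [← e0, ← et]; exact h0t
end
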